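/- arXiv:1709.09334 — 9 statements merged into one kernel-verified Lean document; each statement's English description precedes it below -/
import Mathlib

section
/- Let m1, m2, λ, c > 0 with m1 + m2 > λ, and γ1, γ2 ∈ [0,1]. Define m̄ = m1 + m2 − λ and α = c(γ1+γ2)/2 + 1/m̄ + sqrt(c²(γ1−γ2)²/4 + 1/m̄²). Then α > γ_i c for i = 1,2, and the rates λ_i* = m_i − 1/(α − γ_i c) satisfy λ1* + λ2* = λ and 1/(m1 − λ1*) + γ1 c = 1/(m2 − λ2*) + γ2 c = α (Wardrop equilibrium conditions). -/
/-!
Write `u = 1/m̄`, `d = c(γ₁ - γ₂)/2` and `s = √(d² + u²)`, so that `α - γ₁c = u + s - d` and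
`α - γ₂c = u + s + d`. Both are positive because `|d| ≤ s`, and since `s² - d² = u²` their
product `(u + s)² - d² = 2u(u + s)` is `u` times their sum. Hence the reciprocals, which are
the spare capacities `mᵢ - λᵢ*`, add up to `1/u = m̄`.
-/

section SqrtSqAddSq

variable {u : ℝ} (d : ℝ)

theorem abs_le_sqrt_sq_add_sq : |d| ≤ √(d ^ 2 + u ^ 2) :=
  Real.abs_le_sqrt (le_add_of_nonneg_right (sq_nonneg u))

theorem add_sqrt_sq_add_sq_sub_pos (hu : 0 < u) : 0 < u + √(d ^ 2 + u ^ 2) - d := by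
  linarith [le_abs_self d, abs_le_sqrt_sq_add_sq (u := u) d]

theorem add_sqrt_sq_add_sq_add_pos (hu : 0 < u) : 0 < u + √(d ^ 2 + u ^ 2) + d := by
  linarith [neg_abs_le d, abs_le_sqrt_sq_add_sq (u := u) d]

theorem one_div_add_sqrt_sub_add_one_div_add_sqrt_add (hu : 0 < u) :
    1 / (u + √(d ^ 2 + u ^ 2) - d) + 1 / (u + √(d ^ 2 + u ^ 2) + d) = 1 / u := by
  set s := √(d ^ 2 + u ^ 2)
  have hs : s ^ 2 = d ^ 2 + u ^ 2 := Real.sq_sqrt (by positivity)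
  have hprod : (u + s - d) * (u + s + d) = 2 * u * (u + s) := by linear_combination hs
  have hus : 0 < u + s := by positivity
  rw [div_add_div _ _ (add_sqrt_sq_add_sq_sub_pos d hu).ne' (add_sqrt_sq_add_sq_add_pos d hu).ne',
    hprod]
  field_simp
  ring

end SqrtSqAddSq

theorem wardrop_equilibrium_two_CPs_general
    (m1 m2 lam c γ1 γ2 mbar α : ℝ)
    (hsum : m1 + m2 > lam)
    (hmbar : mbar = m1 + m2 - lam)
    (hα : α = c*(γ1+γ2)/2 + 1/mbar + Real.sqrt (c^2*(γ1-γ2)^2/4 + 1/mbar^2)) :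
    α > γ1*c ∧ α > γ2*c ∧
    (m1 - 1/(α - γ1*c)) + (m2 - 1/(α - γ2*c)) = lam ∧
    1/(m1 - (m1 - 1/(α - γ1*c))) + γ1*c = α ∧
    1/(m2 - (m2 - 1/(α - γ2*c))) + γ2*c = α := by
  have hu_pos : 0 < 1 / mbar := by rw [hmbar]; exact one_div_pos.mpr (by linarith)
  set d := c * (γ1 - γ2) / 2
  set u := 1 / mbar
  have hrad : c^2*(γ1-γ2)^2/4 + 1/mbar^2 = d ^ 2 + u ^ 2 := by ring
  have h1 : α - γ1*c = u + √(d ^ 2 + u ^ 2) - d := by rw [hα, hrad]; ring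
  have h2 : α - γ2*c = u + √(d ^ 2 + u ^ 2) + d := by rw [hα, hrad]; ring
  have hspare : 1/(α - γ1*c) + 1/(α - γ2*c) = mbar := by
    rw [h1, h2, one_div_add_sqrt_sub_add_one_div_add_sqrt_add d hu_pos, one_div_one_div]
  refine ⟨?_, ?_, ?_, ?_, ?_⟩
  · linarith [add_sqrt_sq_add_sq_sub_pos d hu_pos]
  · linarith [add_sqrt_sq_add_sq_add_pos d hu_pos]
  · linarith
  · rw [sub_sub_cancel, one_div_one_div, sub_add_cancel]
  · rw [sub_sub_cancel, one_div_one_div, sub_add_cancel]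

/-- Wardrop equilibrium for two CPs: with the stated `α`, the rates
`λᵢ* = mᵢ − 1/(α − γᵢ c)` sum to `λ` and equalize user costs at level `α`. -/
theorem wardrop_equilibrium_two_CPs
    (m1 m2 lam c γ1 γ2 mbar α : ℝ)
    (hm1 : 0 < m1) (hm2 : 0 < m2) (hlam : 0 < lam) (hc : 0 < c)
    (hsum : m1 + m2 > lam)
    (hγ1 : γ1 ∈ Set.Icc (0:ℝ) 1) (hγ2 : γ2 ∈ Set.Icc (0:ℝ) 1)
    (hmbar : mbar = m1 + m2 - lam)
    (hα : α = c*(γ1+γ2)/2 + 1/mbar + Real.sqrt (c^2*(γ1-γ2)^2/4 + 1/mbar^2)) :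
    α > γ1*c ∧ α > γ2*c ∧
    (m1 - 1/(α - γ1*c)) + (m2 - 1/(α - γ2*c)) = lam ∧
    1/(m1 - (m1 - 1/(α - γ1*c))) + γ1*c = α ∧
    1/(m2 - (m2 - 1/(α - γ2*c))) + γ2*c = α :=
  wardrop_equilibrium_two_CPs_general m1 m2 lam c γ1 γ2 mbar α hsum hmbar hα
end

section
/- With m̄ = m1 + m2 − λ > 0 fixed and c > 0, the equilibrium cost α(γ1, γ2) = c(γ1+γ2)/2 + 1/m̄ + sqrt(c²(γ1−γ2)²/4 + 1/m̄²) satisfies: the equilibrium rate λ1*(γ1, γ2) = m1 − 1/(α − γ1 c) is strictly increasing in γ2 for fixed γ1 (and symmetrically λ2* is strictly increasing in γ1). -/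
private lemma g_pos (b x : ℝ) (hb : 0 < b) : 0 < x + Real.sqrt (x^2 + b^2) := by
  have h : |x| < Real.sqrt (x^2 + b^2) := by
    have : Real.sqrt (x^2) < Real.sqrt (x^2 + b^2) := by
      apply Real.sqrt_lt_sqrt (sq_nonneg x); nlinarith
    simpa [Real.sqrt_sq_eq_abs] using this
  have := neg_abs_le x
  linarith

private lemma g_mono (b : ℝ) (hb : 0 < b) {x y : ℝ} (h : x < y) :
    x + Real.sqrt (x^2 + b^2) < y + Real.sqrt (y^2 + b^2) := by
  have hx := g_pos b x hb
  have hy := g_pos b y hb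
  have hsx : Real.sqrt (x^2 + b^2) ^ 2 = x^2 + b^2 := Real.sq_sqrt (by positivity)
  have hsy : Real.sqrt (y^2 + b^2) ^ 2 = y^2 + b^2 := Real.sq_sqrt (by positivity)
  have hnx : 0 ≤ Real.sqrt (x^2 + b^2) := Real.sqrt_nonneg _
  have hny : 0 ≤ Real.sqrt (y^2 + b^2) := Real.sqrt_nonneg _
  nlinarith [mul_pos (sub_pos.2 h) (add_pos hx hy)]

private lemma key (b c γ1 : ℝ) (hb : 0 < b) (hc : 0 < c) {γ2 γ2' : ℝ} (h : γ2 < γ2') :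
    1/((c*(γ1+γ2')/2 + b + Real.sqrt (c^2*(γ1-γ2')^2/4 + b^2)) - γ1*c)
    < 1/((c*(γ1+γ2)/2 + b + Real.sqrt (c^2*(γ1-γ2)^2/4 + b^2)) - γ1*c) := by
  set x := c*(γ2-γ1)/2 with hxdef
  set y := c*(γ2'-γ1)/2 with hydef
  have e1 : c^2*(γ1-γ2)^2/4 = x^2 := by rw [hxdef]; ring
  have e2 : c^2*(γ1-γ2')^2/4 = y^2 := by rw [hydef]; ring
  have e3 : (c*(γ1+γ2)/2 + b + Real.sqrt (c^2*(γ1-γ2)^2/4 + b^2)) - γ1*c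
      = (x + Real.sqrt (x^2 + b^2)) + b := by rw [e1]; ring
  have e4 : (c*(γ1+γ2')/2 + b + Real.sqrt (c^2*(γ1-γ2')^2/4 + b^2)) - γ1*c
      = (y + Real.sqrt (y^2 + b^2)) + b := by rw [e2]; ring
  rw [e3, e4]
  have hxy : x < y := by
    rw [hxdef, hydef]
    have := mul_lt_mul_of_pos_left (sub_lt_sub_right h γ1) hc
    linarith
  have hm := g_mono b hb hxy
  have hpx : 0 < (x + Real.sqrt (x^2 + b^2)) + b := by linarith [g_pos b x hb]
  exact one_div_lt_one_div_of_lt hpx (by linarith)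

/-- The equilibrium rate at a CP is strictly increasing in the other CP's
subsidy factor. -/
theorem equilibrium_rate_increasing_in_other_subsidy
    (m1 m2 lam c : ℝ)
    (hm1 : 0 < m1) (hm2 : 0 < m2) (hlam : 0 < lam) (hc : 0 < c)
    (hsum : m1 + m2 > lam) :
    (∀ γ1 ∈ Set.Icc (0:ℝ) 1, ∀ γ2 ∈ Set.Icc (0:ℝ) 1, ∀ γ2' ∈ Set.Icc (0:ℝ) 1,
      γ2 < γ2' →
      m1 - 1/((c*(γ1+γ2)/2 + 1/(m1+m2-lam)
          + Real.sqrt (c^2*(γ1-γ2)^2/4 + 1/(m1+m2-lam)^2)) - γ1*c)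
      < m1 - 1/((c*(γ1+γ2')/2 + 1/(m1+m2-lam)
          + Real.sqrt (c^2*(γ1-γ2')^2/4 + 1/(m1+m2-lam)^2)) - γ1*c)) ∧
    (∀ γ2 ∈ Set.Icc (0:ℝ) 1, ∀ γ1 ∈ Set.Icc (0:ℝ) 1, ∀ γ1' ∈ Set.Icc (0:ℝ) 1,
      γ1 < γ1' →
      m2 - 1/((c*(γ1+γ2)/2 + 1/(m1+m2-lam)
          + Real.sqrt (c^2*(γ1-γ2)^2/4 + 1/(m1+m2-lam)^2)) - γ2*c)
      < m2 - 1/((c*(γ1'+γ2)/2 + 1/(m1+m2-lam)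
          + Real.sqrt (c^2*(γ1'-γ2)^2/4 + 1/(m1+m2-lam)^2)) - γ2*c)) := by
  have hb : 0 < 1/(m1+m2-lam) := by
    apply one_div_pos.2; linarith
  have hb2 : (1/(m1+m2-lam))^2 = 1/(m1+m2-lam)^2 := by
    rw [div_pow, one_pow]
  constructor
  · intro γ1 _ γ2 _ γ2' _ h
    have := key (1/(m1+m2-lam)) c γ1 hb hc h
    rw [hb2] at this
    linarith
  · intro γ2 _ γ1 _ γ1' _ h
    have := key (1/(m1+m2-lam)) c γ2 hb hc h
    rw [hb2] at this
    have s1 : c^2*(γ2-γ1)^2/4 = c^2*(γ1-γ2)^2/4 := by ring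
    have s2 : c^2*(γ2-γ1')^2/4 = c^2*(γ1'-γ2)^2/4 := by ring
    have a1 : c*(γ2+γ1)/2 = c*(γ1+γ2)/2 := by ring
    have a2 : c*(γ2+γ1')/2 = c*(γ1'+γ2)/2 := by ring
    rw [s1, s2, a1, a2] at this
    linarith
end

section
/- If γ1 < γ2, then the equilibrium quantity α − γ1 c = c(γ2−γ1)/2 + 1/m̄ + sqrt(c²(γ1−γ2)²/4 + 1/m̄²) is strictly increasing in c, and hence λ1* = m1 − 1/(α − γ1 c) is strictly increasing in c while λ2* = λ − λ1* is strictly decreasing in c. Conversely, if γ1 > γ2, then λ1* is strictly decreasing in c. -/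
lemma sqrt_gt_abs (x b : ℝ) (hb : 0 < b) : |x| < Real.sqrt (x^2 + b^2) := by
  have h : x^2 < x^2 + b^2 := by nlinarith
  calc |x| = Real.sqrt (x^2) := (Real.sqrt_sq_eq_abs x).symm
  _ < Real.sqrt (x^2 + b^2) := Real.sqrt_lt_sqrt (sq_nonneg x) h

lemma helper_mono (b x y : ℝ) (hb : 0 < b) (hx : 0 ≤ x) (hxy : x < y) :
    x + Real.sqrt (x^2 + b^2) < y + Real.sqrt (y^2 + b^2) := by
  have h : Real.sqrt (x^2 + b^2) ≤ Real.sqrt (y^2 + b^2) :=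
    Real.sqrt_le_sqrt (by nlinarith)
  linarith

lemma helper_repr (b x : ℝ) (hb : 0 < b) (hx : 0 ≤ x) :
    Real.sqrt (x^2 + b^2) - x = b^2 / (x + Real.sqrt (x^2 + b^2)) := by
  have hS : Real.sqrt (x^2 + b^2) ^ 2 = x^2 + b^2 :=
    Real.sq_sqrt (by positivity)
  have hpos : 0 < x + Real.sqrt (x^2 + b^2) := by
    have := sqrt_gt_abs x b hb
    have := abs_nonneg x
    have := le_abs_self x
    linarith
  field_simp
  nlinarith [hS]

lemma helper_anti (b x y : ℝ) (hb : 0 < b) (hx : 0 ≤ x) (hxy : x < y) :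
    Real.sqrt (y^2 + b^2) - y < Real.sqrt (x^2 + b^2) - x := by
  have hy : 0 ≤ y := le_of_lt (lt_of_le_of_lt hx hxy)
  rw [helper_repr b x hb hx, helper_repr b y hb hy]
  have hposx : 0 < x + Real.sqrt (x^2 + b^2) := by
    have := sqrt_gt_abs x b hb; have := le_abs_self x; linarith
  exact div_lt_div_of_pos_left (by positivity) hposx (helper_mono b x y hb hx hxy)

/-- Monotonicity in the access price `c` of the equilibrium rates,
depending on the ordering of the subsidy factors. -/
theorem equilibrium_rates_monotone_in_price
    (m1 m2 lam γ1 γ2 mbar : ℝ)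
    (hm1 : 0 < m1) (hm12 : m1 < m2) (hlam : 0 < lam)
    (hmbar : mbar = m1 + m2 - lam) (hmbarpos : 0 < mbar)
    (hγ1 : γ1 ∈ Set.Icc (0:ℝ) 1) (hγ2 : γ2 ∈ Set.Icc (0:ℝ) 1) :
    (γ1 < γ2 →
      StrictMonoOn (fun c : ℝ => c*(γ2-γ1)/2 + 1/mbar
          + Real.sqrt (c^2*(γ1-γ2)^2/4 + 1/mbar^2)) (Set.Ioi 0) ∧
      StrictMonoOn (fun c : ℝ => m1 - 1/(c*(γ2-γ1)/2 + 1/mbar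
          + Real.sqrt (c^2*(γ1-γ2)^2/4 + 1/mbar^2))) (Set.Ioi 0) ∧
      StrictAntiOn (fun c : ℝ => lam - (m1 - 1/(c*(γ2-γ1)/2 + 1/mbar
          + Real.sqrt (c^2*(γ1-γ2)^2/4 + 1/mbar^2)))) (Set.Ioi 0)) ∧
    (γ2 < γ1 →
      StrictAntiOn (fun c : ℝ => m1 - 1/((c*(γ1+γ2)/2 + 1/mbar
          + Real.sqrt (c^2*(γ1-γ2)^2/4 + 1/mbar^2)) - γ1*c)) (Set.Ioi 0)) := by
  have hb : 0 < 1/mbar := by positivity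
  constructor
  · intro hγ
    have hd : 0 < γ2 - γ1 := by linarith
    have key : ∀ c : ℝ, c^2*(γ1-γ2)^2/4 + 1/mbar^2
        = (c*(γ2-γ1)/2)^2 + (1/mbar)^2 := by intro c; ring
    -- pointwise strict monotonicity of F
    have hFmono : ∀ c ∈ Set.Ioi (0:ℝ), ∀ c' ∈ Set.Ioi (0:ℝ), c < c' →
        (c*(γ2-γ1)/2 + 1/mbar + Real.sqrt (c^2*(γ1-γ2)^2/4 + 1/mbar^2))
        < (c'*(γ2-γ1)/2 + 1/mbar + Real.sqrt (c'^2*(γ1-γ2)^2/4 + 1/mbar^2)) := by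
      intro c hc c' hc' hcc'
      rw [key c, key c']
      have hc0 : (0:ℝ) < c := hc
      have hx : 0 ≤ c*(γ2-γ1)/2 := by nlinarith
      have hxy : c*(γ2-γ1)/2 < c'*(γ2-γ1)/2 := by nlinarith
      have := helper_mono (1/mbar) (c*(γ2-γ1)/2) (c'*(γ2-γ1)/2) hb hx hxy
      linarith
    have hFpos : ∀ c ∈ Set.Ioi (0:ℝ),
        0 < c*(γ2-γ1)/2 + 1/mbar + Real.sqrt (c^2*(γ1-γ2)^2/4 + 1/mbar^2) := by
      intro c hc
      have hc0 : (0:ℝ) < c := hc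
      have hx : 0 ≤ c*(γ2-γ1)/2 := by nlinarith
      have hs : 0 ≤ Real.sqrt (c^2*(γ1-γ2)^2/4 + 1/mbar^2) := Real.sqrt_nonneg _
      linarith
    refine ⟨?_, ?_, ?_⟩
    · intro c hc c' hc' hcc'
      exact hFmono c hc c' hc' hcc'
    · intro c hc c' hc' hcc'
      have h1 := hFmono c hc c' hc' hcc'
      have h2 := hFpos c hc
      have h3 := one_div_lt_one_div_of_lt h2 h1
      simp only
      linarith
    · intro c hc c' hc' hcc'
      have h1 := hFmono c hc c' hc' hcc'
      have h2 := hFpos c hc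
      have h3 := one_div_lt_one_div_of_lt h2 h1
      simp only
      linarith
  · intro hγ
    have he : 0 < γ1 - γ2 := by linarith
    have key : ∀ c : ℝ, c^2*(γ1-γ2)^2/4 + 1/mbar^2
        = (c*(γ1-γ2)/2)^2 + (1/mbar)^2 := by intro c; ring
    have hGrepr : ∀ c : ℝ, (c*(γ1+γ2)/2 + 1/mbar
        + Real.sqrt (c^2*(γ1-γ2)^2/4 + 1/mbar^2)) - γ1*c
        = 1/mbar + (Real.sqrt ((c*(γ1-γ2)/2)^2 + (1/mbar)^2) - c*(γ1-γ2)/2) := by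
      intro c; rw [key c]; ring
    have hGanti : ∀ c ∈ Set.Ioi (0:ℝ), ∀ c' ∈ Set.Ioi (0:ℝ), c < c' →
        (Real.sqrt ((c'*(γ1-γ2)/2)^2 + (1/mbar)^2) - c'*(γ1-γ2)/2)
        < (Real.sqrt ((c*(γ1-γ2)/2)^2 + (1/mbar)^2) - c*(γ1-γ2)/2) := by
      intro c hc c' hc' hcc'
      have hc0 : (0:ℝ) < c := hc
      have hx : 0 ≤ c*(γ1-γ2)/2 := by nlinarith
      have hxy : c*(γ1-γ2)/2 < c'*(γ1-γ2)/2 := by nlinarith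
      exact helper_anti (1/mbar) _ _ hb hx hxy
    have hGpos : ∀ c : ℝ, 0 ≤ c*(γ1-γ2)/2 →
        0 < Real.sqrt ((c*(γ1-γ2)/2)^2 + (1/mbar)^2) - c*(γ1-γ2)/2 := by
      intro c hx
      have := sqrt_gt_abs (c*(γ1-γ2)/2) (1/mbar) hb
      have := le_abs_self (c*(γ1-γ2)/2)
      linarith
    intro c hc c' hc' hcc'
    have hc0 : (0:ℝ) < c := hc
    have hc'0 : (0:ℝ) < c' := hc'
    have hx : 0 ≤ c*(γ1-γ2)/2 := by nlinarith
    have hx' : 0 ≤ c'*(γ1-γ2)/2 := by nlinarith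
    have h1 := hGanti c hc c' hc' hcc'
    have h2 := hGpos c' hx'
    simp only [hGrepr c, hGrepr c']
    have hpos' : 0 < 1/mbar + (Real.sqrt ((c'*(γ1-γ2)/2)^2 + (1/mbar)^2) - c'*(γ1-γ2)/2) := by
      linarith
    have h3 := one_div_lt_one_div_of_lt hpos' (by linarith :
      1/mbar + (Real.sqrt ((c'*(γ1-γ2)/2)^2 + (1/mbar)^2) - c'*(γ1-γ2)/2)
      < 1/mbar + (Real.sqrt ((c*(γ1-γ2)/2)^2 + (1/mbar)^2) - c*(γ1-γ2)/2))
    linarith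
end

section
/- If γ1 = γ2 = γ for some γ ∈ [0,1], then the equilibrium cost is α = cγ + 2/m̄, the equilibrium rates λ_i* = m_i − m̄/2 do not depend on γ or c, and the mean delay D = Σ_i (λ_i*/λ)·(1/(m_i − λ_i*)) equals 2/m̄. -/
/-- With symmetric subsidies the equilibrium cost is `cγ + 2/m̄`, rates are
`mᵢ − m̄/2` (independent of `γ` and `c`) and the mean delay is `2/m̄`. -/
theorem symmetric_subsidies_delay
    (m1 m2 lam c γ mbar : ℝ)
    (hlam : 0 < lam) (hc : 0 < c) (hγ : γ ∈ Set.Icc (0:ℝ) 1)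
    (hmbar : mbar = m1 + m2 - lam) (hmbarpos : 0 < mbar)
    (hm1 : m1 > mbar/2) (hm2 : m2 > mbar/2) :
    (c*(γ+γ)/2 + 1/mbar + Real.sqrt (c^2*(γ-γ)^2/4 + 1/mbar^2)) = c*γ + 2/mbar ∧
    m1 - 1/((c*γ + 2/mbar) - γ*c) = m1 - mbar/2 ∧
    m2 - 1/((c*γ + 2/mbar) - γ*c) = m2 - mbar/2 ∧
    ((m1 - mbar/2)/lam) * (1/(m1 - (m1 - mbar/2)))
      + ((m2 - mbar/2)/lam) * (1/(m2 - (m2 - mbar/2))) = 2/mbar := by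
  have hm : mbar ≠ 0 := ne_of_gt hmbarpos
  have hsq : Real.sqrt (c^2*(γ-γ)^2/4 + 1/mbar^2) = 1/mbar := by
    rw [show c^2*(γ-γ)^2/4 + 1/mbar^2 = (1/mbar)^2 by ring]
    exact Real.sqrt_sq (by positivity)
  refine ⟨by rw [hsq]; ring, ?_, ?_, ?_⟩
  · rw [show c*γ + 2/mbar - γ*c = 2/mbar by ring, one_div_div]
  · rw [show c*γ + 2/mbar - γ*c = 2/mbar by ring, one_div_div]
  · have hlam' : lam ≠ 0 := ne_of_gt hlam
    rw [show m1 - (m1 - mbar/2) = mbar/2 by ring,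
        show m2 - (m2 - mbar/2) = mbar/2 by ring]
    field_simp
    ring_nf
    rw [hmbar]; ring
end

section
/- The mean delay at equilibrium satisfies the closed form D(c, γ1, γ2) = c(γ1−γ2)(m2−m1)/(2λ) + (m1+m2)/(λ m̄) − 2/λ + (m1+m2)·sqrt((c m̄ (γ1−γ2))² + 4)/(2 λ m̄). -/
/-- Closed form for the mean delay at the Wardrop equilibrium. -/
theorem mean_delay_closed_form
    (m1 m2 lam c γ1 γ2 mbar α : ℝ)
    (hm1 : 0 < m1) (hm12 : m1 ≤ m2) (hlam : 0 < lam) (hc : 0 < c)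
    (hγ1 : γ1 ∈ Set.Icc (0:ℝ) 1) (hγ2 : γ2 ∈ Set.Icc (0:ℝ) 1)
    (hmbar : mbar = m1 + m2 - lam) (hmbarpos : 0 < mbar)
    (hα : α = c*(γ1+γ2)/2 + 1/mbar + Real.sqrt (c^2*(γ1-γ2)^2/4 + 1/mbar^2)) :
    ((m1 - 1/(α - γ1*c))/lam) * (α - γ1*c)
      + ((m2 - 1/(α - γ2*c))/lam) * (α - γ2*c)
    = c*(γ1-γ2)*(m2-m1)/(2*lam) + (m1+m2)/(lam*mbar) - 2/lam
      + (m1+m2) * Real.sqrt ((c*mbar*(γ1-γ2))^2 + 4) / (2*lam*mbar) := by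
  set S := Real.sqrt (c^2*(γ1-γ2)^2/4 + 1/mbar^2) with hS
  set T := Real.sqrt ((c*mbar*(γ1-γ2))^2 + 4) with hTdef
  have hmb : (0:ℝ) < 1/mbar := by positivity
  have hS0 : 0 ≤ S := Real.sqrt_nonneg _
  have hS2 : S^2 = c^2*(γ1-γ2)^2/4 + 1/mbar^2 := Real.sq_sqrt (by positivity)
  have hT0 : 0 ≤ T := Real.sqrt_nonneg _
  have hT2 : T^2 = (c*mbar*(γ1-γ2))^2 + 4 := Real.sq_sqrt (by positivity)
  have hT : T = 2*mbar*S := by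
    have h : T^2 = (2*mbar*S)^2 := by
      rw [hT2]
      have : (2*mbar*S)^2 = 4*mbar^2*S^2 := by ring
      rw [this, hS2]
      field_simp
    have h2 : 0 ≤ 2*mbar*S := by positivity
    nlinarith [sq_nonneg (T - 2*mbar*S)]
  have habs : |c*(γ1-γ2)/2| ≤ S := by
    rw [hS, ← Real.sqrt_sq_eq_abs]
    apply Real.sqrt_le_sqrt
    nlinarith [mul_pos hmb hmb]
  obtain ⟨ha1, ha2⟩ := abs_le.mp habs
  have h1 : 0 < α - γ1*c := by rw [hα]; linarith
  have h2 : 0 < α - γ2*c := by rw [hα]; linarith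
  rw [hT]
  have e1 : (m1 - 1/(α - γ1*c))/lam * (α - γ1*c) = (m1*(α - γ1*c) - 1)/lam := by
    field_simp
  have e2 : (m2 - 1/(α - γ2*c))/lam * (α - γ2*c) = (m2*(α - γ2*c) - 1)/lam := by
    field_simp
  rw [e1, e2, hα]
  field_simp
  ring
end

section
/- If γ1 < γ2, the derivative of D(c, γ1, γ2) with respect to c is nonnegative if and only if c ≥ (sqrt(m2/m1) − sqrt(m1/m2)) / (m̄ (γ2 − γ1)); hence D has a unique minimizer in c. -/
/-!
Put `T = c·m̄·(γ2 − γ1)`. Differentiating, `D'(c) = (γ2 − γ1)/(2λ) · ((m1 + m2)·T/√(T² + 4) − (m2 − m1))`,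
and `T ↦ T/√(T² + 4)` is strictly increasing, so `D'` changes sign exactly once. With `x = √(m2/m1)`
and `T = x − x⁻¹` one has `√(T² + 4) = x + x⁻¹`, hence `T/√(T² + 4) = (x² − 1)/(x² + 1) = (m2 − m1)/(m2 + m1)`:
this is where `D'` vanishes. So `D` decreases strictly before that point and increases strictly after it.
-/

open Real Set

theorem hasDerivAt_sqrt_sq_add {a : ℝ} (ha : 0 < a) (x : ℝ) :
    HasDerivAt (fun x : ℝ => √(x ^ 2 + a)) (x / √(x ^ 2 + a)) x := by
  have h := ((hasDerivAt_pow 2 x).add_const a).sqrt (by positivity)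
  convert h using 1
  field_simp
  ring

theorem strictMono_div_sqrt_sq_add {a : ℝ} (ha : 0 < a) :
    StrictMono fun x : ℝ => x / √(x ^ 2 + a) := by
  refine strictMono_of_deriv_pos fun x => ?_
  have hS : 0 < √(x ^ 2 + a) := sqrt_pos.2 (by positivity)
  rw [((hasDerivAt_id' x).fun_div (hasDerivAt_sqrt_sq_add ha x) hS.ne').deriv]
  have hsq : √(x ^ 2 + a) ^ 2 = x ^ 2 + a := sq_sqrt (by positivity)
  have : 1 * √(x ^ 2 + a) - x * (x / √(x ^ 2 + a)) = a / √(x ^ 2 + a) := by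
    field_simp
    linarith
  rw [this]
  positivity

theorem sqrt_sub_inv_sq_add_four {x : ℝ} (hx : 0 < x) :
    √((x - x⁻¹) ^ 2 + 4) = x + x⁻¹ := by
  rw [← sqrt_sq (by positivity : 0 ≤ x + x⁻¹)]
  congr 1
  field_simp
  ring

theorem sub_inv_div_sqrt_sq_add_four {x : ℝ} (hx : 0 < x) :
    (x - x⁻¹) / √((x - x⁻¹) ^ 2 + 4) = (x ^ 2 - 1) / (x ^ 2 + 1) := by
  rw [sqrt_sub_inv_sq_add_four hx]
  field_simp

theorem existsUnique_isMinOn_of_strictAntiOn_of_strictMonoOn {α β : Type*} [LinearOrder α]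
    [Preorder β] {f : α → β} {s : Set α} {a : α} (ha : a ∈ s)
    (hanti : StrictAntiOn f (Iic a)) (hmono : StrictMonoOn f (Ici a)) :
    ∃! x, x ∈ s ∧ IsMinOn f s x := by
  have hlt : ∀ x, x ≠ a → f a < f x := fun x hx => by
    rcases hx.lt_or_gt with h | h
    · exact hanti h.le self_mem_Iic h
    · exact hmono self_mem_Ici h.le h
  refine ⟨a, ⟨ha, fun x _ => ?_⟩, fun x ⟨hx, hmin⟩ => ?_⟩
  · rcases eq_or_ne x a with rfl | h
    · exact le_rfl
    · exact (hlt x h).le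
  · by_contra h
    exact (hlt x h).not_ge (hmin ha)

theorem existsUnique_isMinOn_of_deriv_neg_of_deriv_pos {f : ℝ → ℝ} {s : Set ℝ} {a : ℝ}
    (ha : a ∈ s) (hf : Differentiable ℝ f) (hneg : ∀ x < a, deriv f x < 0)
    (hpos : ∀ x > a, 0 < deriv f x) : ∃! x, x ∈ s ∧ IsMinOn f s x := by
  refine existsUnique_isMinOn_of_strictAntiOn_of_strictMonoOn ha ?_ ?_
  · refine strictAntiOn_of_deriv_neg (convex_Iic a) hf.continuous.continuousOn fun x hx => ?_
    exact hneg x (by simpa using hx)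
  · refine strictMonoOn_of_deriv_pos (convex_Ici a) hf.continuous.continuousOn fun x hx => ?_
    exact hpos x (by simpa using hx)

theorem add_mul_div_sqrt_sq_add_four_sqrt_div_sub_sqrt_div {m1 m2 : ℝ} (hm1 : 0 < m1)
    (hm2 : 0 < m2) :
    (m1 + m2) * ((√(m2 / m1) - √(m1 / m2)) / √((√(m2 / m1) - √(m1 / m2)) ^ 2 + 4)) = m2 - m1 := by
  rw [← inv_div m2, sqrt_inv, sub_inv_div_sqrt_sq_add_four (sqrt_pos.2 (by positivity)),
    sq_sqrt (by positivity)]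
  field_simp
  ring

noncomputable def meanDelay (m1 m2 lam mbar γ1 γ2 c : ℝ) : ℝ :=
  c * (γ1 - γ2) * (m2 - m1) / (2 * lam) + (m1 + m2) / (lam * mbar) - 2 / lam
    + (m1 + m2) * √((c * mbar * (γ1 - γ2)) ^ 2 + 4) / (2 * lam * mbar)

theorem hasDerivAt_meanDelay {m1 m2 lam mbar γ1 γ2 : ℝ} (hmbar : mbar ≠ 0) (c : ℝ) :
    HasDerivAt (meanDelay m1 m2 lam mbar γ1 γ2)
      ((γ2 - γ1) / (2 * lam) * ((m1 + m2) * (c * (mbar * (γ2 - γ1)) /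
        √((c * (mbar * (γ2 - γ1))) ^ 2 + 4)) - (m2 - m1))) c := by
  have hsq (c : ℝ) : (c * mbar * (γ1 - γ2)) ^ 2 = (c * (mbar * (γ2 - γ1))) ^ 2 := by ring
  have hT : HasDerivAt (fun c : ℝ => c * (mbar * (γ2 - γ1))) (mbar * (γ2 - γ1)) c := by
    simpa using (hasDerivAt_id c).mul_const (mbar * (γ2 - γ1))
  have h := ((((hasDerivAt_id c).mul_const ((γ1 - γ2) * (m2 - m1) / (2 * lam))).add_const
    ((m1 + m2) / (lam * mbar) - 2 / lam)).add
    (((hasDerivAt_sqrt_sq_add four_pos _).comp c hT).const_mul ((m1 + m2) / (2 * lam * mbar))))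
  refine (h.congr_deriv ?_).congr_of_eventuallyEq (.of_forall fun c => ?_)
  · field_simp
    ring
  · simp only [meanDelay, hsq, Pi.add_apply, Function.comp, id]
    ring

theorem mean_delay_derivative_sign_and_unique_min_general
    (m1 m2 lam γ1 γ2 mbar : ℝ)
    (hm1 : 0 < m1) (hm12 : m1 < m2) (hlam : 0 < lam)
    (hγ : γ1 < γ2)
    (hmbarpos : 0 < mbar) :
    (∀ c : ℝ, 0 < c →
      (0 ≤ deriv (fun c : ℝ => c*(γ1-γ2)*(m2-m1)/(2*lam) + (m1+m2)/(lam*mbar)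
          - 2/lam + (m1+m2) * Real.sqrt ((c*mbar*(γ1-γ2))^2 + 4) / (2*lam*mbar)) c
        ↔ c ≥ (Real.sqrt (m2/m1) - Real.sqrt (m1/m2)) / (mbar*(γ2-γ1)))) ∧
    (∃! c₀ : ℝ, c₀ ∈ Set.Ioi (0:ℝ) ∧
      IsMinOn (fun c : ℝ => c*(γ1-γ2)*(m2-m1)/(2*lam) + (m1+m2)/(lam*mbar)
          - 2/lam + (m1+m2) * Real.sqrt ((c*mbar*(γ1-γ2))^2 + 4) / (2*lam*mbar))
        (Set.Ioi 0) c₀) := by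
  have hm2 : 0 < m2 := hm1.trans hm12
  set k := mbar * (γ2 - γ1)
  have hk : 0 < k := mul_pos hmbarpos (sub_pos.2 hγ)
  set T := √(m2 / m1) - √(m1 / m2)
  have hT : 0 < T := sub_pos.2 <| sqrt_lt_sqrt (by positivity) <|
    ((div_lt_one hm2).2 hm12).trans ((one_lt_div hm1).2 hm12)
  set ψ : ℝ → ℝ := fun c => c * k / √((c * k) ^ 2 + 4)
  have hψ : StrictMono ψ :=
    (strictMono_div_sqrt_sq_add four_pos).comp (strictMono_mul_right_of_pos hk)
  have hψ_threshold : (m1 + m2) * ψ (T / k) = m2 - m1 := by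
    simpa only [ψ, div_mul_cancel₀ _ hk.ne'] using
      add_mul_div_sqrt_sq_add_four_sqrt_div_sub_sqrt_div hm1 hm2
  have hK : 0 < (γ2 - γ1) / (2 * lam) * (m1 + m2) := by
    have := sub_pos.2 hγ
    positivity
  have hderiv (c : ℝ) : deriv (meanDelay m1 m2 lam mbar γ1 γ2) c =
      (γ2 - γ1) / (2 * lam) * (m1 + m2) * (ψ c - ψ (T / k)) := by
    rw [(hasDerivAt_meanDelay hmbarpos.ne' c).deriv, ← hψ_threshold]
    ring
  refine ⟨fun c _ => ?_, ?_⟩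
  · show 0 ≤ deriv (meanDelay m1 m2 lam mbar γ1 γ2) c ↔ c ≥ T / k
    rw [ge_iff_le, hderiv, mul_nonneg_iff_of_pos_left hK, sub_nonneg, hψ.le_iff_le]
  · refine existsUnique_isMinOn_of_deriv_neg_of_deriv_pos (f := meanDelay m1 m2 lam mbar γ1 γ2)
      (div_pos hT hk) (fun c => (hasDerivAt_meanDelay hmbarpos.ne' c).differentiableAt)
      (fun c hc => ?_) (fun c hc => ?_)
    · rw [hderiv]
      exact mul_neg_of_pos_of_neg hK (sub_neg.2 (hψ hc))
    · rw [hderiv]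
      exact mul_pos hK (sub_pos.2 (hψ hc))

/-- When `γ1 < γ2`, the derivative of the mean delay in `c` is nonnegative iff
`c` exceeds an explicit threshold; hence the delay has a unique minimizer. -/
theorem mean_delay_derivative_sign_and_unique_min
    (m1 m2 lam γ1 γ2 mbar : ℝ)
    (hm1 : 0 < m1) (hm12 : m1 < m2) (hlam : 0 < lam)
    (hγ1 : γ1 ∈ Set.Icc (0:ℝ) 1) (hγ2 : γ2 ∈ Set.Icc (0:ℝ) 1) (hγ : γ1 < γ2)
    (hmbar : mbar = m1 + m2 - lam) (hmbarpos : 0 < mbar) :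
    (∀ c : ℝ, 0 < c →
      (0 ≤ deriv (fun c : ℝ => c*(γ1-γ2)*(m2-m1)/(2*lam) + (m1+m2)/(lam*mbar)
          - 2/lam + (m1+m2) * Real.sqrt ((c*mbar*(γ1-γ2))^2 + 4) / (2*lam*mbar)) c
        ↔ c ≥ (Real.sqrt (m2/m1) - Real.sqrt (m1/m2)) / (mbar*(γ2-γ1)))) ∧
    (∃! c₀ : ℝ, c₀ ∈ Set.Ioi (0:ℝ) ∧
      IsMinOn (fun c : ℝ => c*(γ1-γ2)*(m2-m1)/(2*lam) + (m1+m2)/(lam*mbar)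
          - 2/lam + (m1+m2) * Real.sqrt ((c*mbar*(γ1-γ2))^2 + 4) / (2*lam*mbar))
        (Set.Ioi 0) c₀) :=
  mean_delay_derivative_sign_and_unique_min_general m1 m2 lam γ1 γ2 mbar hm1 hm12 hlam hγ hmbarpos
end

section
/- If γ2 ≤ γ1, then D(c, γ1, γ2) ≥ 2/m̄ for all c > 0, where 2/m̄ is the delay under symmetric subsidies (the neutral regime). -/
/-- If the CP with lower capacity offers at least as much subsidy
(`γ2 ≤ γ1` means CP1 pays users a higher subsidy than CP2), the delay in the
differential regime is at least the neutral-regime delay `2/m̄`. -/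
theorem delay_at_least_neutral_when_gamma2_le_gamma1
    (m1 m2 lam γ1 γ2 mbar : ℝ)
    (hm1 : 0 < m1) (hm12 : m1 < m2) (hlam : 0 < lam)
    (hγ1 : γ1 ∈ Set.Icc (0:ℝ) 1) (hγ2 : γ2 ∈ Set.Icc (0:ℝ) 1) (hγ : γ2 ≤ γ1)
    (hmbar : mbar = m1 + m2 - lam) (hmbarpos : 0 < mbar) :
    ∀ c : ℝ, 0 < c →
      c*(γ1-γ2)*(m2-m1)/(2*lam) + (m1+m2)/(lam*mbar) - 2/lam
        + (m1+m2) * Real.sqrt ((c*mbar*(γ1-γ2))^2 + 4) / (2*lam*mbar)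
      ≥ 2/mbar := by
  intro c hc
  have hs : (2:ℝ) ≤ Real.sqrt ((c*mbar*(γ1-γ2))^2 + 4) := by
    have h4 : (2:ℝ) = Real.sqrt 4 := by
      rw [show (4:ℝ) = 2^2 by norm_num, Real.sqrt_sq]; norm_num
    rw [h4]
    exact Real.sqrt_le_sqrt (by nlinarith [sq_nonneg (c*mbar*(γ1-γ2))])
  have h1 : 0 ≤ c*(γ1-γ2)*(m2-m1)/(2*lam) := by
    apply div_nonneg _ (by linarith)
    have h0 : 0 ≤ γ1 - γ2 := by linarith
    exact mul_nonneg (mul_nonneg hc.le h0) (by linarith)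
  have h2 : (m1+m2)/(lam*mbar) ≤ (m1+m2) * Real.sqrt ((c*mbar*(γ1-γ2))^2 + 4) / (2*lam*mbar) := by
    rw [div_le_div_iff₀ (by positivity) (by positivity)]
    have hm12' : 0 ≤ m1 + m2 := by linarith
    nlinarith [mul_le_mul_of_nonneg_right (mul_le_mul_of_nonneg_left hs hm12')
      (le_of_lt (mul_pos hlam hmbarpos))]
  have h3 : (m1+m2)/(lam*mbar) - 2/lam = 2/mbar - (m1+m2)/(lam*mbar) := by
    field_simp
    subst hmbar
    ring
  linarith
end

section
/- If γ2 > γ1, then D(c, γ1, γ2) ≥ 2/m̄ if and only if c(γ2 − γ1) ≥ (1/m̄)·(m2/m1 − m1/m2). -/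
/-- If `γ2 > γ1`, the delay exceeds the neutral regime value iff the price
gap exceeds an explicit threshold. -/
theorem delay_threshold_when_gamma2_gt_gamma1
    (m1 m2 lam γ1 γ2 mbar c : ℝ)
    (hm1 : 0 < m1) (hm12 : m1 < m2) (hlam : 0 < lam) (hc : 0 < c)
    (hγ1 : γ1 ∈ Set.Icc (0:ℝ) 1) (hγ2 : γ2 ∈ Set.Icc (0:ℝ) 1) (hγ : γ1 < γ2)
    (hmbar : mbar = m1 + m2 - lam) (hmbarpos : 0 < mbar) :
    (c*(γ1-γ2)*(m2-m1)/(2*lam) + (m1+m2)/(lam*mbar) - 2/lam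
        + (m1+m2) * Real.sqrt ((c*mbar*(γ1-γ2))^2 + 4) / (2*lam*mbar)
      ≥ 2/mbar)
    ↔ c*(γ2-γ1) ≥ (1/mbar) * (m2/m1 - m1/m2) := by
  set x : ℝ := c * mbar * (γ2 - γ1) with hxdef
  have hx : 0 < x := by
    have := sub_pos.mpr hγ
    positivity
  set s : ℝ := Real.sqrt ((c*mbar*(γ1-γ2))^2 + 4) with hsdef
  have hs0 : 0 ≤ s := Real.sqrt_nonneg _
  have hsq : s ^ 2 = x ^ 2 + 4 := by
    rw [hsdef, Real.sq_sqrt (by positivity : (0:ℝ) ≤ (c*mbar*(γ1-γ2))^2 + 4), hxdef]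
    ring
  have hm2 : 0 < m2 := hm1.trans hm12
  have key1 : (c*(γ1-γ2)*(m2-m1)/(2*lam) + (m1+m2)/(lam*mbar) - 2/lam
        + (m1+m2) * s / (2*lam*mbar) ≥ 2/mbar)
      ↔ (m1+m2) * s ≥ x*(m2-m1) + 2*(m1+m2) := by
    have hden : (0:ℝ) < 2*lam*mbar := by positivity
    have expand : c*(γ1-γ2)*(m2-m1)/(2*lam) + (m1+m2)/(lam*mbar) - 2/lam
        + (m1+m2) * s / (2*lam*mbar) - 2/mbar
        = ((m1+m2) * s - (x*(m2-m1) + 2*(m1+m2))) / (2*lam*mbar) := by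
      subst hmbar
      field_simp
      ring
    constructor
    · intro h
      have h0 : 0 ≤ ((m1+m2) * s - (x*(m2-m1) + 2*(m1+m2))) / (2*lam*mbar) := by
        rw [← expand]; linarith
      have := (div_nonneg_iff.mp h0)
      rcases this with ⟨h1, _⟩ | ⟨_, h2⟩
      · linarith
      · linarith
    · intro h
      have h0 : 0 ≤ ((m1+m2) * s - (x*(m2-m1) + 2*(m1+m2))) / (2*lam*mbar) :=
        div_nonneg (by linarith) (le_of_lt hden)
      rw [← expand] at h0
      linarith
  have key2 : (c*(γ2-γ1) ≥ (1/mbar) * (m2/m1 - m1/m2))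
      ↔ x * (m1*m2) ≥ (m2-m1)*(m1+m2) := by
    have e : (1/mbar) * (m2/m1 - m1/m2) = ((m2-m1)*(m1+m2))/(mbar*(m1*m2)) := by
      field_simp
      ring
    rw [ge_iff_le, e, div_le_iff₀ (by positivity : (0:ℝ) < mbar*(m1*m2)),
      (by rw [hxdef]; ring : c*(γ2-γ1)*(mbar*(m1*m2)) = x*(m1*m2)), ge_iff_le]
  rw [key1, key2]
  have hs2 : ((m1+m2)*s)^2 = (m1+m2)^2*(x^2+4) := by rw [mul_pow, hsq]
  have hid : (m1+m2)^2*(x^2+4) - (x*(m2-m1)+2*(m1+m2))^2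
      = 4*(x*(x*(m1*m2)-(m2-m1)*(m1+m2))) := by ring
  have hR : 0 < x*(m2-m1) + 2*(m1+m2) := by nlinarith
  have hms : 0 ≤ (m1+m2)*s := mul_nonneg (by positivity) hs0
  constructor
  · intro h
    have hsq2 : ((m1+m2)*s)^2 ≥ (x*(m2-m1) + 2*(m1+m2))^2 := by nlinarith [h, hR]
    have hA : 0 ≤ x*(x*(m1*m2)-(m2-m1)*(m1+m2)) := by linarith
    nlinarith [hA, hx]
  · intro h
    have hA : 0 ≤ x*(x*(m1*m2)-(m2-m1)*(m1+m2)) :=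
      mul_nonneg (le_of_lt hx) (by linarith)
    have hsq2 : ((m1+m2)*s)^2 ≥ (x*(m2-m1) + 2*(m1+m2))^2 := by linarith
    nlinarith [hms, hsq2, hR]
end

section
/- In the key step of showing (N,S) is not an equilibrium: for α10 = c/2 + 1/m̄ + sqrt(c²/4 + 1/m̄²) (case λ0 = 0), one has m1(1/α10 − m̄/2) + m2(1/(α10 − c) − m̄/2) ≥ 0, while m̄²/(2 + sqrt((c m̄)² + 4)) − m̄²/4 < 0. -/
/-- Key inequality in showing `(N,S)` is not an equilibrium (case `λ0 = 0`). -/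
theorem NS_key_step
    (m1 m2 c mbar α10 : ℝ)
    (hm1 : 0 < m1) (hm12 : m1 ≤ m2) (hc : 0 < c) (hmbar : 0 < mbar)
    (hα10 : α10 = c/2 + 1/mbar + Real.sqrt (c^2/4 + 1/mbar^2)) :
    m1*(1/α10 - mbar/2) + m2*(1/(α10 - c) - mbar/2) ≥ 0 ∧
    mbar^2/(2 + Real.sqrt ((c*mbar)^2 + 4)) - mbar^2/4 < 0 := by
  set s := Real.sqrt (c^2/4 + 1/mbar^2) with hsdef
  have harg : (0:ℝ) ≤ c^2/4 + 1/mbar^2 := by positivity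
  have hs0 : 0 ≤ s := Real.sqrt_nonneg _
  have hs2 : s^2 = c^2/4 + 1/mbar^2 := Real.sq_sqrt harg
  have hmb : 0 < 1/mbar := by positivity
  have hb : mbar * (1/mbar) = 1 := by field_simp
  have hsc : c/2 ≤ s := by
    have h1 : Real.sqrt (c^2/4) ≤ s := by
      apply Real.sqrt_le_sqrt
      have h0 : (0:ℝ) ≤ 1/mbar^2 := by positivity
      linarith
    have h2 : Real.sqrt (c^2/4) = c/2 := by
      rw [show c^2/4 = (c/2)^2 by ring, Real.sqrt_sq (by linarith)]
    linarith
  have hAc : 0 < α10 - c := by rw [hα10]; nlinarith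
  have hA : 0 < α10 := by linarith
  have key : mbar * (α10 * (α10 - c)) = 2*α10 - c := by
    rw [hα10]
    linear_combination mbar * hs2 + (2*s + 2/mbar) * hb
  have hsum : 1/α10 + 1/(α10 - c) = mbar := by
    field_simp
    linear_combination -key
  have hle : 1/α10 ≤ 1/(α10 - c) := by
    apply one_div_le_one_div_of_le hAc; linarith
  have hu : 0 ≤ 1/(α10 - c) - mbar/2 := by linarith
  constructor
  · nlinarith [mul_nonneg (sub_nonneg.2 hm12) hu, mul_le_mul_of_nonneg_left hle hm1.le]
  · have h2 : (2:ℝ) < Real.sqrt ((c*mbar)^2 + 4) := by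
      rw [show (2:ℝ) = Real.sqrt 4 by
        rw [show (4:ℝ) = 2^2 by norm_num, Real.sqrt_sq (by norm_num)]]
      apply Real.sqrt_lt_sqrt (by norm_num)
      nlinarith [pow_pos (mul_pos hc hmbar) 2]
    have hden : (0:ℝ) < 2 + Real.sqrt ((c*mbar)^2 + 4) := by linarith
    have : mbar^2/(2 + Real.sqrt ((c*mbar)^2 + 4)) < mbar^2/4 :=
      div_lt_div_of_pos_left (by positivity) (by norm_num) (by linarith)
    linarith
end
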